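/- arXiv:2208.00560 — 10 statements merged into one kernel-verified Lean document; each statement's English description precedes it below -/
import Mathlib

section
/- Let (g,[.,.]) be a Leibniz algebra over a field K and T : g → g a Rota-Baxter operator on g. Define a new bracket by [x,y]_* = [x,Ty] + [Tx,y] for all x,y ∈ g. Then (g,[.,.]_*) is a Leibniz algebra; that is, [x,[y,z]_*]_* = [[x,y]_*,z]_* + [y,[x,z]_*]_* for all x,y,z ∈ g. -/
/-- A bilinear map between modules over a field `K`, expressed as a predicate
on a curried two-argument function. -/
def Bilin (K : Type*) [Field K] {A B C : Type*} [AddCommGroup A] [Module K A]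
    [AddCommGroup B] [Module K B] [AddCommGroup C] [Module K C]
    (f : A → B → C) : Prop :=
  (∀ a a' b, f (a + a') b = f a b + f a' b) ∧
  (∀ (c : K) (a : A) (b : B), f (c • a) b = c • f a b) ∧
  (∀ a b b', f a (b + b') = f a b + f a b') ∧
  (∀ (c : K) (a : A) (b : B), f a (c • b) = c • f a b)

/-- The (left) Leibniz identity for a bracket. -/
def IsLeibnizBracket {g : Type*} [AddCommGroup g] (br : g → g → g) : Prop :=
  ∀ x y z, br x (br y z) = br (br x y) z + br y (br x z)

/-- If `T` is a Rota-Baxter operator on a Leibniz algebra `(g, br)`, then the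
induced bracket `[x,y]_* = [x,Ty] + [Tx,y]` is again a Leibniz bracket. -/
theorem induced_bracket_is_leibniz {K : Type*} [Field K]
    {g : Type*} [AddCommGroup g] [Module K g]
    (br : g → g → g) (hbil : Bilin K br) (hleib : IsLeibnizBracket br)
    (T : g → g) (hT : IsLinearMap K T)
    (hRB : ∀ x y, br (T x) (T y) = T (br (T x) y + br x (T y)))
    (brs : g → g → g) (hbrs : ∀ x y, brs x y = br x (T y) + br (T x) y) :
    IsLeibnizBracket brs := by
  intro x y z
  obtain ⟨hl, -, hr, -⟩ := hbil
  have hTb : ∀ a b, T (br a (T b) + br (T a) b) = br (T a) (T b) := fun a b => by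
    rw [add_comm, ← hRB]
  simp only [hbrs, hTb, hl, hr]
  rw [hleib x (T y) (T z), hleib (T x) y (T z), hleib (T x) (T y) z]
  abel
end

section
/- Let (g,[.,.]) be a Leibniz algebra over a field K and T : g → g a Rota-Baxter operator on g. Define [x,y]_* = [x,Ty] + [Tx,y]. Then T is also a Rota-Baxter operator on the Leibniz algebra (g,[.,.]_*); that is, [Tx,Ty]_* = T([Tx,y]_* + [x,Ty]_*) for all x,y ∈ g. -/
/-- If `T` is a Rota-Baxter operator on a Leibniz algebra `(g, br)`, then `T`
is also a Rota-Baxter operator on the induced Leibniz algebra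
`(g, [x,y]_* = [x,Ty] + [Tx,y])`. -/
theorem rota_baxter_on_induced_bracket {K : Type*} [Field K]
    {g : Type*} [AddCommGroup g] [Module K g]
    (br : g → g → g) (hbil : Bilin K br) (hleib : IsLeibnizBracket br)
    (T : g → g) (hT : IsLinearMap K T)
    (hRB : ∀ x y, br (T x) (T y) = T (br (T x) y + br x (T y)))
    (brs : g → g → g) (hbrs : ∀ x y, brs x y = br x (T y) + br (T x) y) :
    ∀ x y, brs (T x) (T y) = T (brs (T x) y + brs x (T y)) := by
  intro x y
  simp only [hbrs]
  rw [hRB x (T y), hRB (T x) y, ← hT.map_add]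
  congr 1
  abel
end

section
/- Let (g,[.,.]) be a Leibniz algebra over a field K, T : g → g a Rota-Baxter operator, and (V, l, r, T_V) a representation of the Rota-Baxter Leibniz algebra (g,[.,.],T). Define [x,y]_* = [x,Ty] + [Tx,y], and define l'(x,u) = l(Tx,u) − T_V(l(x,u)) and r'(u,x) = r(u,Tx) − T_V(r(u,x)) for x ∈ g, u ∈ V. Then (V, l', r', T_V) is a representation of the Rota-Baxter Leibniz algebra (g,[.,.]_*,T); that is, the following five identities hold for all x,y ∈ g and u ∈ V: (i) l'(x,l'(y,u)) = l'([x,y]_*,u) + l'(y,l'(x,u)); (ii) l'(x,r'(u,y)) = r'(l'(x,u),y) + r'(u,[x,y]_*); (iii) r'(u,[x,y]_*) = r'(r'(u,x),y) + l'(x,r'(u,y)); (iv) l'(Tx,T_V u) = T_V(l'(Tx,u) + l'(x,T_V u)); (v) r'(T_V u,Tx) = T_V(r'(T_V u,x) + r'(u,Tx)). -/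
/-- A representation of a Leibniz algebra `(g, br)` on `V`, given by left and
right actions `l : g → V → V` and `r : V → g → V`. -/
def IsLeibnizRep {g V : Type*} [AddCommGroup g] [AddCommGroup V]
    (br : g → g → g) (l : g → V → V) (r : V → g → V) : Prop :=
  (∀ x y u, l x (l y u) = l (br x y) u + l y (l x u)) ∧
  (∀ x y u, l x (r u y) = r (l x u) y + r u (br x y)) ∧
  (∀ x y u, r u (br x y) = r (r u x) y + l x (r u y))

/-- A representation of a Rota-Baxter Leibniz algebra `(g, br, T)` on
`(V, l, r, TV)`. -/
def IsRBRep {g V : Type*} [AddCommGroup g] [AddCommGroup V]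
    (br : g → g → g) (T : g → g) (l : g → V → V) (r : V → g → V)
    (TV : V → V) : Prop :=
  IsLeibnizRep br l r ∧
  (∀ x u, l (T x) (TV u) = TV (l (T x) u + l x (TV u))) ∧
  (∀ x u, r (TV u) (T x) = TV (r (TV u) x + r u (T x)))

/-- Given a representation `(V, l, r, TV)` of a Rota-Baxter Leibniz algebra
`(g, br, T)`, the maps `l'(x,u) = l(Tx,u) - TV(l(x,u))` and
`r'(u,x) = r(u,Tx) - TV(r(u,x))` make `(V, l', r', TV)` a representation of
the Rota-Baxter Leibniz algebra `(g, [x,y]_* = [x,Ty]+[Tx,y], T)`. -/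
theorem induced_representation {K : Type*} [Field K]
    {g : Type*} [AddCommGroup g] [Module K g]
    {V : Type*} [AddCommGroup V] [Module K V]
    (br : g → g → g) (hbil : Bilin K br) (hleib : IsLeibnizBracket br)
    (T : g → g) (hT : IsLinearMap K T)
    (hRB : ∀ x y, br (T x) (T y) = T (br (T x) y + br x (T y)))
    (l : g → V → V) (r : V → g → V) (TV : V → V)
    (hl : Bilin K l) (hr : Bilin K r) (hTV : IsLinearMap K TV)
    (hrep : IsRBRep br T l r TV) :
    IsRBRep (fun x y => br x (T y) + br (T x) y) T
      (fun x u => l (T x) u - TV (l x u))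
      (fun u x => r u (T x) - TV (r u x)) TV := by

  obtain ⟨⟨h1, h2, h3⟩, h4, h5⟩ := hrep
  -- negation/subtraction lemmas for the bilinear maps
  have lneg2 : ∀ a v, l a (-v) = - l a v := fun a v => by
    rw [← neg_one_smul K v, hl.2.2.2, neg_one_smul]
  have lsub2 : ∀ a u v, l a (u - v) = l a u - l a v := fun a u v => by
    rw [sub_eq_add_neg, hl.2.2.1, lneg2, sub_eq_add_neg]
  have rneg1 : ∀ v a, r (-v) a = - r v a := fun v a => by
    rw [← neg_one_smul K v, hr.2.1, neg_one_smul]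
  have rsub1 : ∀ u v a, r (u - v) a = r u a - r v a := fun u v a => by
    rw [sub_eq_add_neg, hr.1, rneg1, sub_eq_add_neg]
  have hTstar : ∀ x y : g, T (br x (T y) + br (T x) y) = br (T x) (T y) := by
    intro x y
    rw [add_comm, ← hRB]
  refine ⟨⟨?_, ?_, ?_⟩, ?_, ?_⟩
  · intro x y u
    simp only [hTstar, lsub2, hTV.map_sub, hTV.map_add, h4, hl.1]
    rw [h1 (T x) (T y) u, h1 (T x) y u, h1 x (T y) u]
    simp only [hTV.map_add]
    abel
  · intro x y u
    simp only [hTstar, lsub2, rsub1, hTV.map_sub, hTV.map_add, h4, h5, hl.2.2.1, hr.2.2.1, hbil.1,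
      hbil.2.2.1]
    rw [h2 (T x) (T y) u, h2 (T x) y u, h2 x (T y) u]
    simp only [hTV.map_add]
    abel
  · intro x y u
    simp only [hTstar, lsub2, rsub1, hTV.map_sub, hTV.map_add, h4, h5, hr.2.2.1, hbil.1, hbil.2.2.1]
    rw [h3 (T x) (T y) u, h3 (T x) y u, h3 x (T y) u]
    simp only [hTV.map_add]
    abel
  · intro x u
    simp only [lsub2, hTV.map_sub, hTV.map_add, h4]
    abel
  · intro x u
    simp only [rsub1, hTV.map_sub, hTV.map_add, h5]
    abel
end

section
/- Let (g,[.,.]) be a Leibniz algebra over a field K, T : g → g a Rota-Baxter operator, and (V, l, r, T_V) a representation of the Rota-Baxter Leibniz algebra (g,[.,.],T). On the dual space V* define l*(x,f)(u) = −f(l(x,u)) and r*(f,x)(u) = f(l(x,u) + r(u,x)) for x ∈ g, f ∈ V*, u ∈ V, and let −T_V* : V* → V* be the map f ↦ −f∘T_V. Then (V*, l*, r*, −T_V*) is a representation of the Rota-Baxter Leibniz algebra (g,[.,.],T); that is: (i) l*(x,l*(y,f)) = l*([x,y],f) + l*(y,l*(x,f)); (ii) l*(x,r*(f,y)) = r*(l*(x,f),y)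 + r*(f,[x,y]); (iii) r*(f,[x,y]) = r*(r*(f,x),y) + l*(x,r*(f,y)); (iv) l*(Tx,−T_V*(f)) = −T_V*(l*(Tx,f) + l*(x,−T_V*(f))); (v) r*(−T_V*(f),Tx) = −T_V*(r*(f,Tx) + r*(−T_V*(f),x)), for all x,y ∈ g and f ∈ V*. -/
/-!
Each identity for `(V*, l*, r*, -TV*)` is, after evaluating at `u : V`, the transpose of an
identity for `(V, l, r, TV)`. The only one that is not a direct transpose is the third Leibniz
axiom, which needs `r (l x u + r u x) y = 0`: this is the difference of the second and third
axioms of the representation `V`.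
-/

namespace IsLeibnizRep

variable {g V : Type*} [AddCommGroup g] [AddCommGroup V]
  {br : g → g → g} {l : g → V → V} {r : V → g → V}

theorem right_symmetrized_eq_zero (hrep : IsLeibnizRep br l r)
    (hr_add : ∀ u v y, r (u + v) y = r u y + r v y) (x y : g) (u : V) :
    r (l x u + r u x) y = 0 := by
  have h := hrep.2.1 x y u
  rw [hrep.2.2 x y u, ← add_assoc] at h
  rw [hr_add]
  exact right_eq_add.mp h

variable {R : Type*} [CommRing R] [Module R V]
  {lstar : g → Module.Dual R V → Module.Dual R V}
  {rstar : Module.Dual R V → g → Module.Dual R V}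

theorem dual (hrep : IsLeibnizRep br l r)
    (hl_add : ∀ x u v, l x (u + v) = l x u + l x v)
    (hr_add : ∀ u v y, r (u + v) y = r u y + r v y)
    (hlstar : ∀ x f u, lstar x f u = - f (l x u))
    (hrstar : ∀ f x u, rstar f x u = f (l x u + r u x)) :
    IsLeibnizRep br lstar rstar := by
  obtain ⟨hll, hlr, hrr⟩ := hrep
  refine ⟨fun x y f => ?_, fun x y f => ?_, fun x y f => ?_⟩ <;> ext u <;>
    simp only [hlstar, hrstar, LinearMap.add_apply, neg_neg]
  · rw [hll x y u, map_add]
    abel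
  · rw [hl_add, hll x y u, hlr x y u]
    simp only [map_add]
    abel
  · rw [hl_add, hll x y u, hlr x y u,
      right_symmetrized_eq_zero ⟨hll, hlr, hrr⟩ hr_add y x u]
    simp only [map_add, map_zero]
    abel

end IsLeibnizRep

namespace IsRBRep

variable {R g V : Type*} [CommRing R] [AddCommGroup g] [AddCommGroup V] [Module R V]
  {br : g → g → g} {T : g → g} {l : g → V → V} {r : V → g → V} {TV : V → V}
  {lstar : g → Module.Dual R V → Module.Dual R V}
  {rstar : Module.Dual R V → g → Module.Dual R V}
  {Tstar : Module.Dual R V → Module.Dual R V}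

theorem dual (hrep : IsRBRep br T l r TV)
    (hl_add : ∀ x u v, l x (u + v) = l x u + l x v)
    (hr_add : ∀ u v y, r (u + v) y = r u y + r v y)
    (hTV_add : ∀ u v, TV (u + v) = TV u + TV v)
    (hlstar : ∀ x f u, lstar x f u = - f (l x u))
    (hrstar : ∀ f x u, rstar f x u = f (l x u + r u x))
    (hTstar : ∀ f u, Tstar f u = - f (TV u)) :
    IsRBRep br T lstar rstar Tstar := by
  obtain ⟨hLeib, hTl, hTr⟩ := hrep
  refine ⟨hLeib.dual hl_add hr_add hlstar hrstar, fun x f => ?_, fun x f => ?_⟩ <;> ext u <;>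
    simp only [hlstar, hrstar, hTstar, LinearMap.add_apply, neg_neg, neg_add_rev,
      hTl x u, hTr x u, hTV_add, map_add] <;>
    abel

end IsRBRep

theorem dual_representation_general {K : Type*} [Field K]
    {g : Type*} [AddCommGroup g] [Module K g]
    {V : Type*} [AddCommGroup V] [Module K V]
    (br : g → g → g)
    (T : g → g)
    (l : g → V → V) (r : V → g → V) (TV : V → V)
    (hl : Bilin K l) (hr : Bilin K r) (hTV : IsLinearMap K TV)
    (hrep : IsRBRep br T l r TV)
    (lstar : g → Module.Dual K V → Module.Dual K V)
    (rstar : Module.Dual K V → g → Module.Dual K V)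
    (Tstar : Module.Dual K V → Module.Dual K V)
    (hlstar : ∀ (x : g) (f : Module.Dual K V) (u : V), lstar x f u = - f (l x u))
    (hrstar : ∀ (f : Module.Dual K V) (x : g) (u : V),
      rstar f x u = f (l x u + r u x))
    (hTstar : ∀ (f : Module.Dual K V) (u : V), Tstar f u = - f (TV u)) :
    IsRBRep br T lstar rstar Tstar :=
  hrep.dual hl.2.2.1 hr.1 hTV.1 hlstar hrstar hTstar

/-- Given a representation `(V, l, r, TV)` of a Rota-Baxter Leibniz algebra
`(g, br, T)`, the dual space `V*` with `l*(x,f)(u) = -f(l(x,u))`,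
`r*(f,x)(u) = f(l(x,u) + r(u,x))` and the operator `-TV* : f ↦ -f ∘ TV` is a
representation of `(g, br, T)` (the dual representation). -/
theorem dual_representation {K : Type*} [Field K]
    {g : Type*} [AddCommGroup g] [Module K g]
    {V : Type*} [AddCommGroup V] [Module K V]
    (br : g → g → g) (hbil : Bilin K br) (hleib : IsLeibnizBracket br)
    (T : g → g) (hT : IsLinearMap K T)
    (hRB : ∀ x y, br (T x) (T y) = T (br (T x) y + br x (T y)))
    (l : g → V → V) (r : V → g → V) (TV : V → V)
    (hl : Bilin K l) (hr : Bilin K r) (hTV : IsLinearMap K TV)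
    (hrep : IsRBRep br T l r TV)
    (lstar : g → Module.Dual K V → Module.Dual K V)
    (rstar : Module.Dual K V → g → Module.Dual K V)
    (Tstar : Module.Dual K V → Module.Dual K V)
    (hlstar : ∀ (x : g) (f : Module.Dual K V) (u : V), lstar x f u = - f (l x u))
    (hrstar : ∀ (f : Module.Dual K V) (x : g) (u : V),
      rstar f x u = f (l x u + r u x))
    (hTstar : ∀ (f : Module.Dual K V) (u : V), Tstar f u = - f (TV u)) :
    IsRBRep br T lstar rstar Tstar :=
  dual_representation_general br T l r TV hl hr hTV hrep lstar rstar Tstar hlstar hrstar hTstar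
end

section
/- Let (g,[.,.]) be a Leibniz algebra over a field K, T a Rota-Baxter operator on g, and (V, l, r, T_V) a representation of the Rota-Baxter Leibniz algebra (g,[.,.],T). Let δ^n denote the Loday–Pirashvili coboundary of (g,[.,.]) with coefficients in (V,l,r), let ∂^n denote the Loday–Pirashvili coboundary of the induced Leibniz algebra (g,[.,.]_*) with coefficients in the induced representation (V,l',r'), and let φ^n : Hom(g^{⊗n},V) → Hom(g^{⊗n},V) be given by φ^n(f)(x_1,…,x_n) = f(Tx_1,…,Tx_n) − Σ_{i=1}^{n} T_V(f(Tx_1,…,Tx_{i−1}, x_i, Tx_{i+1},…,Tx_n)). Then for every n ≥ 1, every n-linear map f : g^{⊗n} → V, and all x_1,…,x_{n+1} ∈ g: φ^{n+1}(δ^n(f))(x_1,…,x_{n+1}) = ∂^n(φ^n(f))(x_1,…,x_{n+1}). -/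
/-- The Loday–Pirashvili coboundary of a Leibniz algebra `(g, br)` with
coefficients in a representation `(V, l, r)`, on `n`-cochains
`f : g^n → V` (indices are `0`-based, corresponding to `x_1, …, x_{n+1}` in
the classical `1`-based notation). -/
def lpCoboundary {g V : Type*} [AddCommGroup g] [AddCommGroup V]
    (br : g → g → g) (l : g → V → V) (r : V → g → V) (n : ℕ)
    (f : (Fin n → g) → V) : (Fin (n + 1) → g) → V :=
  fun x =>
    (∑ i : Fin n, ((-1 : ℤ) ^ (i : ℕ)) •
        l (x i.castSucc) (f fun k => x (i.castSucc.succAbove k)))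
      + ((-1 : ℤ) ^ (n + 1)) • r (f fun k => x k.castSucc) (x (Fin.last n))
      + ∑ i : Fin (n + 1), ∑ j : Fin n,
          if (i : ℕ) ≤ (j : ℕ) then
            ((-1 : ℤ) ^ ((i : ℕ) + 1)) •
              f (Function.update (fun k => x (i.succAbove k)) j
                  (br (x i) (x j.succ)))
          else 0

/-- The map `φ^n : Hom(g^{⊗n}, V) → Hom(g^{⊗n}, V)` given by
`φ^n(f)(x_1,…,x_n) = f(Tx_1,…,Tx_n)
  - Σ_i T_V (f (Tx_1,…,Tx_{i-1}, x_i, Tx_{i+1},…,Tx_n))`. -/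
def phiMap {g V : Type*} [AddCommGroup V] (T : g → g) (TV : V → V) (n : ℕ)
    (f : (Fin n → g) → V) : (Fin n → g) → V :=
  fun x =>
    f (fun k => T (x k))
      - ∑ i : Fin n, TV (f (Function.update (fun k => T (x k)) i (x i)))

/-! Both coboundaries are sums of three pieces: the terms with the left action, the term with the
right action, and the terms with the bracket. Since `T_V` is additive, `φ` distributes over this
splitting, and it intertwines the pieces one by one. For the action pieces, the compatibility of
`T_V` with `l` and `r` cancels the mixed terms `l (T x) (T_V u) - T_V (l x (T_V u))` against the
terms of `φ^{n+1}` in which `T` is dropped from an argument other than the one acted on. For the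
bracket pieces, the Rota–Baxter identity `T [x, y]_* = [T x, T y]`, together with the additivity of
`f` in the slot that carries `[x_i, x_j]_* = [x_i, T x_j] + [T x_i, x_j]`, produces exactly the
terms of `φ^{n+1}` in which `T` is dropped from `x_i` or from `x_j`. -/

open Function Finset

section Pieces

variable {g V : Type*} [AddCommGroup V]

def lpLeft (l : g → V → V) (n : ℕ) (f : (Fin n → g) → V) (x : Fin (n + 1) → g) : V :=
  ∑ i : Fin n, ((-1 : ℤ) ^ (i : ℕ)) • l (x i.castSucc) (f fun k => x (i.castSucc.succAbove k))

def lpRight (r : V → g → V) (n : ℕ) (f : (Fin n → g) → V) (x : Fin (n + 1) → g) : V :=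
  ((-1 : ℤ) ^ (n + 1)) • r (f fun k => x k.castSucc) (x (Fin.last n))

def lpBracket (br : g → g → g) (n : ℕ) (f : (Fin n → g) → V) (x : Fin (n + 1) → g) : V :=
  ∑ i : Fin (n + 1), ∑ j : Fin n,
    if (i : ℕ) ≤ (j : ℕ) then
      ((-1 : ℤ) ^ ((i : ℕ) + 1)) • f (update (fun k => x (i.succAbove k)) j (br (x i) (x j.succ)))
    else 0

theorem lpCoboundary_eq_add [AddCommGroup g] (br : g → g → g) (l : g → V → V) (r : V → g → V)
    (n : ℕ) (f : (Fin n → g) → V) :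
    lpCoboundary br l r n f = lpLeft l n f + lpRight r n f + lpBracket br n f :=
  rfl

theorem phiMap_add (T : g → g) (TV : V →+ V) (m : ℕ) (F G : (Fin m → g) → V) :
    phiMap T TV m (F + G) = phiMap T TV m F + phiMap T TV m G := by
  funext x
  simp only [phiMap, Pi.add_apply, map_add, sum_add_distrib]
  abel

theorem phiMap_lpLeft (T : g → g) (TV : V →+ V) (l : g → V →+ V)
    (hl : ∀ a u, l (T a) (TV u) = TV (l (T a) u + l a (TV u))) (n : ℕ) (f : (Fin n → g) → V) :
    phiMap T TV (n + 1) (lpLeft (fun a => l a) n f)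
      = lpLeft (fun a u => l (T a) u - TV (l a u)) n (phiMap T TV n f) := by
  funext x
  have hsum : ∑ p, TV (lpLeft (fun a => l a) n f (update (fun k => T (x k)) p (x p)))
      = ∑ i : Fin n, ((-1 : ℤ) ^ (i : ℕ)) •
          (TV (l (x i.castSucc) (f fun k => T (x (i.castSucc.succAbove k))))
            + ∑ q, TV (l (T (x i.castSucc)) (f (update
                (fun k => T (x (i.castSucc.succAbove k))) q (x (i.castSucc.succAbove q)))))) := by
    simp only [lpLeft, map_sum, map_zsmul]
    rw [sum_comm]
    refine sum_congr rfl fun i _ => ?_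
    rw [Fin.sum_univ_succAbove _ i.castSucc, smul_add, smul_sum, update_self,
      update_comp_eq_of_forall_ne' _ _ (Fin.succAbove_ne _)]
    congr 1
    refine sum_congr rfl fun q _ => ?_
    rw [update_of_ne (Fin.succAbove_ne _ q).symm,
      update_comp_eq_of_injective' _ Fin.succAbove_right_injective]
  have hcancel : ∀ a u, l (T a) (TV u) - TV (l a (TV u)) = TV (l (T a) u) := by
    intro a u
    rw [hl, map_add]
    abel
  rw [phiMap, hsum]
  simp only [lpLeft, phiMap, map_sub, map_sum, ← sum_sub_distrib]
  refine sum_congr rfl fun i _ => ?_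
  rw [← smul_sub]
  congr 1
  simp only [← hcancel, sum_sub_distrib]
  abel

theorem phiMap_lpRight (T : g → g) (TV : V →+ V) (r : V →+ g → V)
    (hr : ∀ a u, r (TV u) (T a) = TV (r (TV u) a + r u (T a))) (n : ℕ) (f : (Fin n → g) → V) :
    phiMap T TV (n + 1) (lpRight r n f)
      = lpRight (fun u a => r u (T a) - TV (r u a)) n (phiMap T TV n f) := by
  funext x
  have hsum : ∑ p, TV (lpRight r n f (update (fun k => T (x k)) p (x p)))
      = ((-1 : ℤ) ^ (n + 1)) • (TV (r (f fun k => T (x k.castSucc)) (x (Fin.last n)))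
          + ∑ q, TV (r (f (update (fun k => T (x k.castSucc)) q (x q.castSucc)))
              (T (x (Fin.last n))))) := by
    simp only [lpRight, map_zsmul]
    rw [Fin.sum_univ_castSucc, add_comm, smul_add, smul_sum, update_self,
      update_comp_eq_of_forall_ne' _ _ (Fin.castSucc_ne_last)]
    congr 1
    refine sum_congr rfl fun q _ => ?_
    rw [update_of_ne (Fin.castSucc_ne_last q).symm,
      update_comp_eq_of_injective' _ (Fin.castSucc_injective n)]
  have hcancel : ∀ a u, r (TV u) (T a) - TV (r (TV u) a) = TV (r u (T a)) := by
    intro a u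
    rw [hr, map_add]
    abel
  rw [phiMap, hsum]
  simp only [lpRight, phiMap, map_sub, map_sum, Pi.sub_apply, Finset.sum_apply, ← smul_sub]
  congr 1
  simp only [← hcancel, sum_sub_distrib]
  abel

theorem phiMap_lpBracket {R : Type*} [Semiring R] [AddCommMonoid g] [Module R g] [Module R V]
    (br : g → g → g) (T : g → g) (hRB : ∀ a b, br (T a) (T b) = T (br (T a) b + br a (T b)))
    (TV : V →+ V) (n : ℕ) (f : MultilinearMap R (fun _ : Fin n => g) V) :
    phiMap T TV (n + 1) (lpBracket br n f)
      = lpBracket (fun a b => br a (T b) + br (T a) b) n (phiMap T TV n f) := by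
  funext x
  rw [phiMap]
  simp only [lpBracket, phiMap, map_sum, apply_ite TV, map_zsmul, map_zero]
  conv_lhs => enter [2]; rw [sum_comm]; enter [2, i]; rw [sum_comm]
  rw [← sum_sub_distrib]
  refine sum_congr rfl fun i _ => ?_
  rw [← sum_sub_distrib]
  refine sum_congr rfl fun j _ => ?_
  by_cases hij : (i : ℕ) ≤ j
  swap
  · simp [hij]
  simp only [hij, if_true]
  rw [← smul_sum, ← smul_sub]
  congr 1
  have hsucc : i.succAbove j = j.succ :=
    Fin.succAbove_of_le_castSucc i j (by simpa [Fin.le_def] using hij)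
  have hne : j.succ ≠ i := fun h => by simp [← h, Fin.val_succ] at hij
  have hT_update : (fun k => T (update (fun k => x (i.succAbove k)) j
      (br (x i) (T (x j.succ)) + br (T (x i)) (x j.succ)) k))
      = update (fun k => T (x (i.succAbove k))) j (br (T (x i)) (T (x j.succ))) := by
    rw [hRB, add_comm]
    exact funext fun k => apply_update (fun _ => T) _ j _ k
  rw [hT_update, Fin.sum_univ_succAbove _ i, update_self,
    update_comp_eq_of_forall_ne' _ _ (Fin.succAbove_ne i), update_of_ne hne]
  congr 1
  simp only [update_comp_eq_of_injective' _ Fin.succAbove_right_injective,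
    update_of_ne (Fin.succAbove_ne i _).symm]
  -- The `j`-th term on the right splits, by additivity of `f`, into the terms where `T` is dropped
  -- from `x i` and from `x j.succ`.
  conv_lhs => rw [Fintype.sum_eq_add_sum_compl j]
  conv_rhs => rw [Fintype.sum_eq_add_sum_compl j]
  rw [← add_assoc]
  congr 1
  · rw [hsucc, update_self, update_idem, update_idem, update_self, f.map_update_add, map_add]
  · refine sum_congr rfl fun q hq => ?_
    have hq : q ≠ j := by simpa using hq
    have hsucc_ne : i.succAbove q ≠ j.succ :=
      hsucc ▸ fun h => hq (Fin.succAbove_right_injective h)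
    rw [update_of_ne hsucc_ne.symm, update_of_ne hq, update_comm hq]

theorem phiMap_lpCoboundary {R : Type*} [Semiring R] [AddCommGroup g] [Module R g] [Module R V]
    (br : g → g → g) (T : g → g) (hRB : ∀ a b, br (T a) (T b) = T (br (T a) b + br a (T b)))
    (TV : V →+ V) (l : g → V →+ V) (r : V →+ g → V)
    (hl : ∀ a u, l (T a) (TV u) = TV (l (T a) u + l a (TV u)))
    (hr : ∀ a u, r (TV u) (T a) = TV (r (TV u) a + r u (T a)))
    (n : ℕ) (f : MultilinearMap R (fun _ : Fin n => g) V) :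
    phiMap T TV (n + 1) (lpCoboundary br (fun a => l a) r n f)
      = lpCoboundary (fun a b => br a (T b) + br (T a) b) (fun a u => l (T a) u - TV (l a u))
          (fun u a => r u (T a) - TV (r u a)) n (phiMap T TV n f) := by
  rw [lpCoboundary_eq_add, lpCoboundary_eq_add, phiMap_add, phiMap_add, phiMap_lpLeft T TV l hl,
    phiMap_lpRight T TV r hr, phiMap_lpBracket br T hRB]

end Pieces

theorem phi_chain_map_general {K : Type*} [Field K]
    {g : Type*} [AddCommGroup g] [Module K g]
    {V : Type*} [AddCommGroup V] [Module K V]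
    (br : g → g → g)
    (T : g → g)
    (hRB : ∀ x y, br (T x) (T y) = T (br (T x) y + br x (T y)))
    (l : g → V → V) (r : V → g → V) (TV : V → V)
    (hl : Bilin K l) (hr : Bilin K r) (hTV : IsLinearMap K TV)
    (hrep : IsRBRep br T l r TV) :
    ∀ (n : ℕ), 1 ≤ n →
      ∀ (f : MultilinearMap K (fun _ : Fin n => g) V) (x : Fin (n + 1) → g),
        phiMap T TV (n + 1) (lpCoboundary br l r n ⇑f) x
          = lpCoboundary (fun a b => br a (T b) + br (T a) b)
              (fun a u => l (T a) u - TV (l a u))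
              (fun u a => r u (T a) - TV (r u a)) n
              (phiMap T TV n ⇑f) x := by
  intro n _ f x
  obtain ⟨-, hlT, hrT⟩ := hrep
  exact congrFun (phiMap_lpCoboundary br T hRB (AddMonoidHom.mk' TV hTV.map_add)
    (fun a => AddMonoidHom.mk' (l a) (hl.2.2.1 a)) (AddMonoidHom.mk' r fun u v => funext (hr.1 u v))
    hlT hrT n f) x

/-- The map `φ` is a chain map from the Loday–Pirashvili complex of
`(g, [.,.])` with coefficients in `(V, l, r)` to the Loday–Pirashvili complex
of the induced Leibniz algebra `(g, [.,.]_*)` with coefficients in the induced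
representation `(V, l', r')`:
`φ^{n+1} (δ^n f) = ∂^n (φ^n f)` for all `n ≥ 1` and all `n`-linear `f`. -/
theorem phi_chain_map {K : Type*} [Field K]
    {g : Type*} [AddCommGroup g] [Module K g]
    {V : Type*} [AddCommGroup V] [Module K V]
    (br : g → g → g) (hbil : Bilin K br) (hleib : IsLeibnizBracket br)
    (T : g → g) (hT : IsLinearMap K T)
    (hRB : ∀ x y, br (T x) (T y) = T (br (T x) y + br x (T y)))
    (l : g → V → V) (r : V → g → V) (TV : V → V)
    (hl : Bilin K l) (hr : Bilin K r) (hTV : IsLinearMap K TV)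
    (hrep : IsRBRep br T l r TV) :
    ∀ (n : ℕ), 1 ≤ n →
      ∀ (f : MultilinearMap K (fun _ : Fin n => g) V) (x : Fin (n + 1) → g),
        phiMap T TV (n + 1) (lpCoboundary br l r n ⇑f) x
          = lpCoboundary (fun a b => br a (T b) + br (T a) b)
              (fun a u => l (T a) u - TV (l a u))
              (fun u a => r u (T a) - TV (r u a)) n
              (phiMap T TV n ⇑f) x :=
  phi_chain_map_general br T hRB l r TV hl hr hTV hrep
end

section
/- Let (g,[.,.]) be a Leibniz algebra over a field K, T a Rota-Baxter operator on g, and (V, l, r, T_V) a representation of the Rota-Baxter Leibniz algebra (g,[.,.],T). Let ∂^n denote the Loday–Pirashvili coboundary of the induced Leibniz algebra (g,[.,.]_*) with coefficients in the induced representation (V,l',r'). Then ∂^{n+1} ∘ ∂^n = 0 for all n ≥ 0; that is, (Hom(g^{⊗n},V), ∂^n) is a cochain complex. -/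
/-!
The Rota–Baxter identities make `[x, y]_* = [x, T y] + [T x, y]` a Leibniz bracket and `(l', r')`
a representation of it, so it suffices to show that the Loday–Pirashvili coboundary of any
Leibniz algebra with a representation squares to zero.

For this, curry the last argument: an `(n+1)`-cochain `f` with values in `V` becomes an
`n`-cochain `f̃` with values in `Hom(g, V)`, and `Hom(g, V)` carries the representation
`(x · α) w = l x (α w) - α [x, w]`, `(α · x) w = α [x, w] - l x (α w) - r (α x) w`,
read off from the terms of `(δ f)(y, z)` that involve the last argument `z`. With it,
`(δ f)(y, z) = (δ f̃)(y)(z)`, so `δ (δ f)` is the curried form of `δ (δ f̃)` and induction on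
`n` reduces everything to `n = 0`, which is the third representation axiom.
-/

open Function

structure IsBiadditive {A B C : Type*} [Add A] [Add B] [Add C] (f : A → B → C) : Prop where
  add_left : ∀ a a' b, f (a + a') b = f a b + f a' b
  add_right : ∀ a b b', f a (b + b') = f a b + f a b'

lemma IsBiadditive.of_bilin {K : Type*} [Field K] {A B C : Type*} [AddCommGroup A] [Module K A]
    [AddCommGroup B] [Module K B] [AddCommGroup C] [Module K C] {f : A → B → C}
    (hf : Bilin K f) : IsBiadditive f :=
  ⟨hf.1, hf.2.2.1⟩

namespace IsBiadditive

variable {A B C : Type*} [AddGroup A] [AddGroup B] [AddGroup C] {f : A → B → C}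

lemma sub_left (hf : IsBiadditive f) (a a' : A) (b : B) : f (a - a') b = f a b - f a' b :=
  (AddMonoidHom.mk' (f · b) fun a a' => hf.add_left a a' b).map_sub a a'

lemma sub_right (hf : IsBiadditive f) (a : A) (b b' : B) : f a (b - b') = f a b - f a b' :=
  (AddMonoidHom.mk' (f a) (hf.add_right a)).map_sub b b'

lemma neg_left (hf : IsBiadditive f) (a : A) (b : B) : f (-a) b = -f a b :=
  (AddMonoidHom.mk' (f · b) fun a a' => hf.add_left a a' b).map_neg a

lemma neg_right (hf : IsBiadditive f) (a : A) (b : B) : f a (-b) = -f a b :=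
  (AddMonoidHom.mk' (f a) (hf.add_right a)).map_neg b

end IsBiadditive

def IsMultiadditive {g V : Type*} [Add g] [Add V] {n : ℕ} (f : (Fin n → g) → V) : Prop :=
  ∀ (x : Fin n → g) (i : Fin n) (u v : g),
    f (update x i (u + v)) = f (update x i u) + f (update x i v)

lemma Fin.snoc_comp_castSucc_succAbove {α : Type*} {m : ℕ} (y : Fin (m + 1) → α) (z : α)
    (p : Fin (m + 1)) :
    (fun k => Fin.snoc (α := fun _ => α) y z (p.castSucc.succAbove k))
      = Fin.snoc (α := fun _ => α) (fun k : Fin m => y (p.succAbove k)) z := by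
  funext k
  induction k using Fin.lastCases with
  | last =>
    have h : p.castSucc.succAbove (Fin.last m) = Fin.last (m + 1) := by
      rw [Fin.succAbove_of_le_castSucc _ _ (by simpa using p.le_last), Fin.succ_last]
    simp [h]
  | cast j => simp [Fin.castSucc_succAbove_castSucc]

section Snoc

variable {g V : Type*} [AddCommGroup V] {m : ℕ} (br : g → g → g) (l : g → V → V) (r : V → g → V)
  (f : (Fin (m + 1) → g) → V) (y : Fin (m + 1) → g) (z : g)

lemma lpCoboundary_leftSum_snoc :
    ∑ i : Fin (m + 1), ((-1 : ℤ) ^ (i : ℕ)) •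
        l (Fin.snoc (α := fun _ => g) y z i.castSucc)
          (f fun k => Fin.snoc (α := fun _ => g) y z (i.castSucc.succAbove k))
      = ∑ i : Fin m, ((-1 : ℤ) ^ (i : ℕ)) •
          l (y i.castSucc) (f (Fin.snoc (fun k => y (i.castSucc.succAbove k)) z))
        + ((-1 : ℤ) ^ m) • l (y (Fin.last m)) (f (Fin.snoc (fun k => y k.castSucc) z)) := by
  simp [Fin.sum_univ_castSucc, Fin.snoc_comp_castSucc_succAbove]

lemma lpCoboundary_rightTerm_snoc :
    ((-1 : ℤ) ^ (m + 1 + 1)) •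
        r (f fun k => Fin.snoc (α := fun _ => g) y z k.castSucc)
          (Fin.snoc (α := fun _ => g) y z (Fin.last (m + 1)))
      = ((-1 : ℤ) ^ m) • r (f y) z := by
  simp [pow_succ]

lemma lpCoboundary_bracketSum_snoc :
    ∑ i : Fin (m + 2), ∑ j : Fin (m + 1),
        (if (i : ℕ) ≤ (j : ℕ) then
          ((-1 : ℤ) ^ ((i : ℕ) + 1)) •
            f (update (fun k => Fin.snoc (α := fun _ => g) y z (i.succAbove k)) j
                (br (Fin.snoc (α := fun _ => g) y z i) (Fin.snoc (α := fun _ => g) y z j.succ)))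
        else 0)
      = ∑ i : Fin (m + 1), ∑ j : Fin m,
          (if (i : ℕ) ≤ (j : ℕ) then
            ((-1 : ℤ) ^ ((i : ℕ) + 1)) •
              f (Fin.snoc (update (fun k => y (i.succAbove k)) j (br (y i) (y j.succ))) z)
          else 0)
        + (∑ i : Fin m, ((-1 : ℤ) ^ ((i : ℕ) + 1)) •
              f (Fin.snoc (fun k => y (i.castSucc.succAbove k)) (br (y i.castSucc) z))
          + ((-1 : ℤ) ^ (m + 1)) •
              f (Fin.snoc (fun k => y k.castSucc) (br (y (Fin.last m)) z))) := by
  have last_row : ∀ j : Fin (m + 1), ¬ ((Fin.last (m + 1) : ℕ) ≤ (j : ℕ)) := fun j => by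
    simp only [Fin.val_last, not_le]; exact j.is_lt
  have row : ∀ i : Fin (m + 1),
      ∑ j : Fin (m + 1),
        (if (i.castSucc : ℕ) ≤ (j : ℕ) then
          ((-1 : ℤ) ^ ((i.castSucc : ℕ) + 1)) •
            f (update (fun k => Fin.snoc (α := fun _ => g) y z (i.castSucc.succAbove k)) j
                (br (Fin.snoc (α := fun _ => g) y z i.castSucc)
                  (Fin.snoc (α := fun _ => g) y z j.succ)))
        else 0)
      = ∑ j : Fin m,
          (if (i : ℕ) ≤ (j : ℕ) then
            ((-1 : ℤ) ^ ((i : ℕ) + 1)) •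
              f (Fin.snoc (update (fun k => y (i.succAbove k)) j (br (y i) (y j.succ))) z)
          else 0)
        + ((-1 : ℤ) ^ ((i : ℕ) + 1)) • f (Fin.snoc (fun k => y (i.succAbove k)) (br (y i) z)) := by
    intro i
    rw [Fin.sum_univ_castSucc, Fin.snoc_comp_castSucc_succAbove]
    congr 1
    · refine Finset.sum_congr rfl fun j _ => ?_
      by_cases h : (i : ℕ) ≤ (j : ℕ)
      · rw [if_pos (by simpa using h), if_pos h, Fin.succ_castSucc, Fin.snoc_castSucc,
          Fin.snoc_castSucc, ← Fin.snoc_update]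
        simp
      · rw [if_neg (by simpa using h), if_neg h]
    · rw [if_pos (by simpa using i.is_le), Fin.succ_last, Fin.snoc_last, Fin.snoc_castSucc,
        Fin.update_snoc_last]
      simp
  rw [Fin.sum_univ_castSucc, Finset.sum_eq_zero fun j _ => if_neg (last_row j), add_zero,
    Finset.sum_congr rfl fun i _ => row i, Finset.sum_add_distrib,
    Fin.sum_univ_castSucc (f := fun i : Fin (m + 1) => ((-1 : ℤ) ^ ((i : ℕ) + 1)) •
      f (Fin.snoc (fun k => y (i.succAbove k)) (br (y i) z)))]
  simp only [Fin.succAbove_last, Fin.val_castSucc, Fin.val_last]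

end Snoc

section HomRepresentation

variable {g V : Type*} [AddCommGroup g] [AddCommGroup V]
  {br : g → g → g} {l : g → V → V} {r : V → g → V}

def homLeft (hbr : IsBiadditive br) (hl : IsBiadditive l) (x : g) (α : g →+ V) : g →+ V :=
  AddMonoidHom.mk' (fun w => l x (α w) - α (br x w)) fun u v => by
    simp only [hbr.add_right, hl.add_right, map_add]
    abel

def homRight (hbr : IsBiadditive br) (hl : IsBiadditive l) (hr : IsBiadditive r)
    (α : g →+ V) (x : g) : g →+ V :=
  AddMonoidHom.mk' (fun w => α (br x w) - l x (α w) - r (α x) w) fun u v => by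
    simp only [hbr.add_right, hl.add_right, hr.add_right, map_add]
    abel

variable (hbr : IsBiadditive br) (hl : IsBiadditive l) (hr : IsBiadditive r)

@[simp] lemma homLeft_apply (x : g) (α : g →+ V) (w : g) :
    homLeft hbr hl x α w = l x (α w) - α (br x w) := rfl

@[simp] lemma homRight_apply (α : g →+ V) (x w : g) :
    homRight hbr hl hr α x w = α (br x w) - l x (α w) - r (α x) w := rfl

lemma isBiadditive_homLeft : IsBiadditive (homLeft hbr hl) := by
  constructor <;> intros <;> ext <;>
    simp only [homLeft_apply, AddMonoidHom.add_apply, hl.add_left, hl.add_right, hbr.add_left,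
      map_add] <;>
    abel

lemma isBiadditive_homRight : IsBiadditive (homRight hbr hl hr) := by
  constructor <;> intros <;> ext <;>
    simp only [homRight_apply, AddMonoidHom.add_apply, hl.add_left, hl.add_right, hbr.add_left,
      hr.add_left, map_add] <;>
    abel

lemma isLeibnizRep_hom (hleib : IsLeibnizBracket br) (hrep : IsLeibnizRep br l r) :
    IsLeibnizRep br (homLeft hbr hl) (homRight hbr hl hr) := by
  obtain ⟨hll, hlr, hrr⟩ := hrep
  refine ⟨fun x y α => ?_, fun x y α => ?_, fun x y α => ?_⟩ <;> ext w <;>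
    simp only [homLeft_apply, homRight_apply, AddMonoidHom.add_apply, hl.sub_right,
      hr.sub_left]
  · rw [hll x y (α w), hleib x y w, map_add]
    abel
  · rw [hll x y (α w), hlr x w (α y), hleib x y w, map_add]
    abel
  · rw [hll x y (α w), hlr x w (α y), hrr y w (α x), hleib x y w, map_add]
    abel

def curryLast {n : ℕ} (f : (Fin (n + 1) → g) → V) (hf : IsMultiadditive f) :
    (Fin n → g) → (g →+ V) :=
  fun u => AddMonoidHom.mk' (fun w => f (Fin.snoc u w)) fun w w' => by
    simpa only [Fin.update_snoc_last] using hf (Fin.snoc u 0) (Fin.last n) w w'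

lemma isMultiadditive_curryLast {n : ℕ} (f : (Fin (n + 1) → g) → V) (hf : IsMultiadditive f) :
    IsMultiadditive (curryLast f hf) := by
  intro x i u v
  ext w
  simpa only [curryLast, AddMonoidHom.mk'_apply, AddMonoidHom.add_apply, Fin.snoc_update]
    using hf _ _ _ _

lemma lpCoboundary_hom_apply {m : ℕ} (f : (Fin (m + 1) → g) → V)
    (F : (Fin m → g) → (g →+ V)) (hF : ∀ u w, F u w = f (Fin.snoc u w))
    (y : Fin (m + 1) → g) (z : g) :
    lpCoboundary br (homLeft hbr hl) (homRight hbr hl hr) m F y z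
      = lpCoboundary br l r (m + 1) f (Fin.snoc y z) := by
  have neg_one_pow_succ : ∀ k : ℕ, (-1 : ℤ) ^ (k + 1) = -(-1 : ℤ) ^ k := fun k => by ring
  have lhs : lpCoboundary br (homLeft hbr hl) (homRight hbr hl hr) m F y z
      = ∑ i : Fin m, ((-1 : ℤ) ^ (i : ℕ)) •
            (l (y i.castSucc) (f (Fin.snoc (fun k => y (i.castSucc.succAbove k)) z))
              - f (Fin.snoc (fun k => y (i.castSucc.succAbove k)) (br (y i.castSucc) z)))
        + ((-1 : ℤ) ^ (m + 1)) •
            (f (Fin.snoc (fun k => y k.castSucc) (br (y (Fin.last m)) z))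
              - l (y (Fin.last m)) (f (Fin.snoc (fun k => y k.castSucc) z))
              - r (f y) z)
        + ∑ i : Fin (m + 1), ∑ j : Fin m,
            (if (i : ℕ) ≤ (j : ℕ) then ((-1 : ℤ) ^ ((i : ℕ) + 1)) •
              f (Fin.snoc (update (fun k => y (i.succAbove k)) j (br (y i) (y j.succ))) z)
            else 0) := by
    simp only [lpCoboundary, AddMonoidHom.add_apply, AddMonoidHom.finsetSum_apply,
      AddMonoidHom.zsmul_apply, apply_ite (fun α : g →+ V => α z), AddMonoidHom.zero_apply,
      homLeft_apply, homRight_apply, hF]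
    rw [show Fin.snoc (fun k => y k.castSucc) (y (Fin.last m)) = y from Fin.snoc_init_self y]
  rw [lhs, lpCoboundary, lpCoboundary_leftSum_snoc, lpCoboundary_rightTerm_snoc,
    lpCoboundary_bracketSum_snoc]
  simp only [smul_sub, neg_one_pow_succ, neg_zsmul, Finset.sum_sub_distrib,
    Finset.sum_neg_distrib, sub_neg_eq_add]
  abel

end HomRepresentation

section Coboundary

universe u v

variable {g : Type u} [AddCommGroup g] {br : g → g → g}

lemma lpCoboundary_one_lpCoboundary_zero {V : Type*} [AddCommGroup V] {l : g → V → V}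
    {r : V → g → V} (hl : IsBiadditive l) (hr : IsBiadditive r)
    (hrr : ∀ x y u, r u (br x y) = r (r u x) y + l x (r u y)) (f : (Fin 0 → g) → V) :
    lpCoboundary br l r 1 (lpCoboundary br l r 0 f) = 0 := by
  have hδ : lpCoboundary br l r 0 f = fun w => -r (f ![]) (w 0) := funext fun w => by
    simp [lpCoboundary, Subsingleton.elim (fun k : Fin 0 => w k.castSucc) ![]]
  funext x
  have expand : lpCoboundary br l r 1 (fun w => -r (f ![]) (w 0)) x
      = -l (x 0) (r (f ![]) (x 1)) - r (r (f ![]) (x 0)) (x 1) + r (f ![]) (br (x 0) (x 1)) := by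
    simp [lpCoboundary, hl.neg_right, hr.neg_left, sub_eq_add_neg]
  rw [hδ, expand, hrr, Pi.zero_apply]
  abel

-- `V` lives in a universe above that of `g`, so that the induction can pass to `g →+ V`.
lemma lpCoboundary_lpCoboundary_eq_zero_of_univ_le (hbr : IsBiadditive br)
    (hleib : IsLeibnizBracket br) (n : ℕ) {V : Type (max u v)} [AddCommGroup V] {l : g → V → V}
    {r : V → g → V} (hl : IsBiadditive l) (hr : IsBiadditive r) (hrep : IsLeibnizRep br l r)
    (f : (Fin n → g) → V) (hf : IsMultiadditive f) :
    lpCoboundary br l r (n + 1) (lpCoboundary br l r n f) = 0 := by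
  induction n generalizing V with
  | zero => exact lpCoboundary_one_lpCoboundary_zero hl hr hrep.2.2 f
  | succ n ih =>
    funext x
    obtain ⟨y, z, rfl⟩ : ∃ y z, x = Fin.snoc y z :=
      ⟨Fin.init x, x (Fin.last _), (Fin.snoc_init_self x).symm⟩
    have hδ_curry := lpCoboundary_hom_apply hbr hl hr f (curryLast f hf) fun _ _ => rfl
    rw [← lpCoboundary_hom_apply hbr hl hr _ _ hδ_curry,
      ih (isBiadditive_homLeft hbr hl) (isBiadditive_homRight hbr hl hr)
        (isLeibnizRep_hom hbr hl hr hleib hrep) _ (isMultiadditive_curryLast f hf)]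
    rfl

lemma lpCoboundary_addEquiv {V W : Type*} [AddCommGroup V] [AddCommGroup W] (e : V ≃+ W)
    (l : g → V → V) (r : V → g → V) (n : ℕ) (f : (Fin n → g) → V) :
    lpCoboundary br (fun a u => e (l a (e.symm u))) (fun u a => e (r (e.symm u) a)) n (e ∘ f)
      = e ∘ lpCoboundary br l r n f := by
  funext x
  simp only [lpCoboundary, comp_apply, map_add, map_sum, map_zsmul, apply_ite e, map_zero,
    AddEquiv.symm_apply_apply]

theorem lpCoboundary_lpCoboundary_eq_zero (hbr : IsBiadditive br) (hleib : IsLeibnizBracket br)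
    {V : Type v} [AddCommGroup V] {l : g → V → V} {r : V → g → V} (hl : IsBiadditive l)
    (hr : IsBiadditive r) (hrep : IsLeibnizRep br l r) {n : ℕ} (f : (Fin n → g) → V)
    (hf : IsMultiadditive f) :
    lpCoboundary br l r (n + 1) (lpCoboundary br l r n f) = 0 := by
  let e : V ≃+ ULift.{u} V := AddEquiv.ulift.symm
  obtain ⟨hll, hlr, hrr⟩ := hrep
  have hzero := lpCoboundary_lpCoboundary_eq_zero_of_univ_le.{u, v} hbr hleib n
    (l := fun a u => e (l a (e.symm u))) (r := fun u a => e (r (e.symm u) a))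
    ⟨fun a b u => by simp only [hl.add_left, map_add],
      fun a u v => by simp only [hl.add_right, map_add]⟩
    ⟨fun u v a => by simp only [hr.add_left, map_add],
      fun u a b => by simp only [hr.add_right, map_add]⟩
    ⟨fun a b u => by simp only [AddEquiv.symm_apply_apply, hll a b (e.symm u), map_add],
      fun a b u => by simp only [AddEquiv.symm_apply_apply, hlr a b (e.symm u), map_add],
      fun a b u => by simp only [AddEquiv.symm_apply_apply, hrr a b (e.symm u), map_add]⟩
    (e ∘ f) fun x i u v => by simp only [comp_apply, hf x i u v, map_add]
  funext x
  apply e.injective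
  rw [Pi.zero_apply, map_zero, ← comp_apply (f := ⇑e), ← lpCoboundary_addEquiv,
    ← lpCoboundary_addEquiv, hzero, Pi.zero_apply]

end Coboundary

section RotaBaxter

variable {g V : Type*} [AddCommGroup g] [AddCommGroup V]
  {br : g → g → g} {T : g →+ g} {l : g → V → V} {r : V → g → V} {TV : V →+ V}

def inducedBracket (br : g → g → g) (T : g →+ g) (x y : g) : g :=
  br x (T y) + br (T x) y

def inducedLeft (l : g → V → V) (T : g →+ g) (TV : V →+ V) (x : g) (u : V) : V :=
  l (T x) u - TV (l x u)

def inducedRight (r : V → g → V) (T : g →+ g) (TV : V →+ V) (u : V) (x : g) : V :=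
  r u (T x) - TV (r u x)

lemma map_inducedBracket (hRB : ∀ x y, br (T x) (T y) = T (br (T x) y + br x (T y)))
    (x y : g) : T (inducedBracket br T x y) = br (T x) (T y) := by
  rw [hRB, inducedBracket, add_comm]

lemma isBiadditive_inducedBracket (hbr : IsBiadditive br) :
    IsBiadditive (inducedBracket br T) := by
  constructor <;> intros <;> simp only [inducedBracket, map_add, hbr.add_left, hbr.add_right] <;>
    abel

lemma isBiadditive_inducedLeft (hl : IsBiadditive l) : IsBiadditive (inducedLeft l T TV) := by
  constructor <;> intros <;> simp only [inducedLeft, map_add, hl.add_left, hl.add_right] <;>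
    abel

lemma isBiadditive_inducedRight (hr : IsBiadditive r) : IsBiadditive (inducedRight r T TV) := by
  constructor <;> intros <;> simp only [inducedRight, map_add, hr.add_left, hr.add_right] <;>
    abel

lemma isLeibnizBracket_inducedBracket (hbr : IsBiadditive br)
    (hRB : ∀ x y, br (T x) (T y) = T (br (T x) y + br x (T y))) (hleib : IsLeibnizBracket br) :
    IsLeibnizBracket (inducedBracket br T) := by
  intro x y z
  have hT : ∀ a b, T (br a (T b) + br (T a) b) = br (T a) (T b) := map_inducedBracket hRB
  simp only [inducedBracket, hT, hbr.add_left, hbr.add_right]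
  rw [hleib x (T y) (T z), hleib (T x) y (T z), hleib (T x) (T y) z]
  abel

lemma isLeibnizRep_induced (hl : IsBiadditive l) (hr : IsBiadditive r)
    (hRB : ∀ x y, br (T x) (T y) = T (br (T x) y + br x (T y))) (hrep : IsRBRep br T l r TV) :
    IsLeibnizRep (inducedBracket br T) (inducedLeft l T TV) (inducedRight r T TV) := by
  obtain ⟨⟨hll, hlr, hrr⟩, hlT, hrT⟩ := hrep
  have hT : ∀ a b, T (br a (T b) + br (T a) b) = br (T a) (T b) := map_inducedBracket hRB
  refine ⟨fun x y u => ?_, fun x y u => ?_, fun x y u => ?_⟩ <;>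
    simp only [inducedLeft, inducedRight, inducedBracket, hT, hl.sub_right, hr.sub_left,
      map_sub]
  · rw [hlT x (l y u), hlT y (l x u)]
    simp only [map_add, hl.add_left]
    rw [hll (T x) (T y) u, hll (T x) y u, hll x (T y) u]
    simp only [map_add]
    abel
  · rw [hlT x (r u y), hrT y (l x u)]
    simp only [map_add, hr.add_right]
    rw [hlr (T x) (T y) u, hlr (T x) y u, hlr x (T y) u]
    simp only [map_add]
    abel
  · rw [hrT y (r u x), hlT x (r u y)]
    simp only [map_add, hr.add_right]
    rw [hrr (T x) (T y) u, hrr (T x) y u, hrr x (T y) u]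
    simp only [map_add]
    abel

end RotaBaxter

/-- The Loday–Pirashvili coboundary `∂` of the induced Leibniz algebra
`(g, [.,.]_*)` with coefficients in the induced representation `(V, l', r')`
squares to zero: `∂^{n+1} ∘ ∂^n = 0`. -/
theorem induced_coboundary_squares_to_zero {K : Type*} [Field K]
    {g : Type*} [AddCommGroup g] [Module K g]
    {V : Type*} [AddCommGroup V] [Module K V]
    (br : g → g → g) (hbil : Bilin K br) (hleib : IsLeibnizBracket br)
    (T : g → g) (hT : IsLinearMap K T)
    (hRB : ∀ x y, br (T x) (T y) = T (br (T x) y + br x (T y)))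
    (l : g → V → V) (r : V → g → V) (TV : V → V)
    (hl : Bilin K l) (hr : Bilin K r) (hTV : IsLinearMap K TV)
    (hrep : IsRBRep br T l r TV) :
    ∀ (n : ℕ) (f : MultilinearMap K (fun _ : Fin n => g) V)
      (x : Fin (n + 2) → g),
      lpCoboundary (fun a b => br a (T b) + br (T a) b)
          (fun a u => l (T a) u - TV (l a u))
          (fun u a => r u (T a) - TV (r u a)) (n + 1)
          (lpCoboundary (fun a b => br a (T b) + br (T a) b)
            (fun a u => l (T a) u - TV (l a u))
            (fun u a => r u (T a) - TV (r u a)) n ⇑f) x = 0 := by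
  intro n f x
  have hbr := IsBiadditive.of_bilin hbil
  have hl' := IsBiadditive.of_bilin hl
  have hr' := IsBiadditive.of_bilin hr
  let T' : g →+ g := (hT.mk' T).toAddMonoidHom
  let TV' : V →+ V := (hTV.mk' TV).toAddMonoidHom
  exact congrFun (lpCoboundary_lpCoboundary_eq_zero (isBiadditive_inducedBracket (T := T') hbr)
    (isLeibnizBracket_inducedBracket hbr hRB hleib) (isBiadditive_inducedLeft (TV := TV') hl')
    (isBiadditive_inducedRight (TV := TV') hr') (isLeibnizRep_induced hl' hr' hRB hrep)
    f fun y i u v => f.map_update_add y i u v) x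
end

section
/- Let (g,μ) be a Leibniz algebra over a field K with Rota-Baxter operator T, and let (μ_t,T_t) be a formal one-parameter deformation of (g,μ,T) given by bilinear maps μ_i and linear maps T_i (i ≥ 0) with μ_0 = μ, T_0 = T. Suppose μ_i = 0 and T_i = 0 for all 1 ≤ i < n (so (μ_n,T_n) is the n-infinitesimal of the deformation). Then (μ_n,T_n) is a 2-cocycle; explicitly, for all x,y,z ∈ g: (i) μ(x,μ_n(y,z)) + μ_n(x,μ(y,z)) = μ(μ_n(x,y),z) + μ_n(μ(x,y),z) + μ_n(y,μ(x,z)) + μ(y,μ_n(x,z)); and (ii) μ_n(Tx,Ty) − T(μ_n(Tx,y)) − T(μ_n(x,Ty)) + μ(T_nx,Ty) + μ(Tx,T_ny) − T_n(μ(Tx,y)) − T(μ(T_nx,y)) − T_n(μ(x,Ty)) − T(μ(x,T_ny)) = 0. -/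
/-! In the order-`n` deformation equations every term containing some `μ_i` or `T_i` with
`0 < i < n` vanishes, so each sum over `i + j = n` (resp. `i + j + k = n`) collapses to the
terms in which a single index equals `n`. What is left is exactly the cocycle condition. -/

namespace Bilin

variable {K : Type*} [Field K] {A B C : Type*} [AddCommGroup A] [Module K A]
    [AddCommGroup B] [Module K B] [AddCommGroup C] [Module K C] {f : A → B → C}

theorem zero_left (hf : Bilin K f) (b : B) : f 0 b = 0 := by
  simpa using hf.2.1 0 0 b

theorem zero_right (hf : Bilin K f) (a : A) : f a 0 = 0 := by
  simpa using hf.2.2.2 0 a 0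

end Bilin

open Finset

section Collapse

variable {M : Type*} [AddCommMonoid M] {n : ℕ}

theorem sum_antidiagonal_eq_add_of_vanish (hn : 0 < n) (f : ℕ × ℕ → M)
    (h : ∀ i j, i + j = n → 0 < i → 0 < j → f (i, j) = 0) :
    ∑ p ∈ antidiagonal n, f p = f (0, n) + f (n, 0) := by
  refine sum_eq_add_of_mem _ _ (by simp) (by simp) (by simp; omega) ?_
  rintro ⟨i, j⟩ hij ⟨h0, h1⟩
  rw [HasAntidiagonal.mem_antidiagonal] at hij
  exact h i j hij (by grind) (by grind)

theorem sum_antidiagonal_antidiagonal_eq_add_add_of_vanish (hn : 0 < n)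
    (G : ℕ → ℕ → ℕ → M)
    (h : ∀ i j k, i + j + k = n →
      (0 < i ∧ i < n) ∨ (0 < j ∧ j < n) ∨ (0 < k ∧ k < n) → G i j k = 0) :
    ∑ p ∈ antidiagonal n, ∑ q ∈ antidiagonal p.2, G p.1 q.1 q.2
      = G 0 0 n + G 0 n 0 + G n 0 0 := by
  rw [sum_antidiagonal_eq_add_of_vanish hn _ fun i j hij hi hj =>
      sum_eq_zero fun q hq => h i q.1 q.2 (by rw [HasAntidiagonal.mem_antidiagonal] at hq; omega)
        (Or.inl ⟨hi, by omega⟩),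
    sum_antidiagonal_eq_add_of_vanish hn _ fun j k hjk hj hk =>
      h 0 j k (by omega) (Or.inr (Or.inl ⟨hj, by omega⟩))]
  simp [add_assoc]

end Collapse

theorem n_infinitesimal_is_cocycle_general {K : Type*} [Field K]
    {g : Type*} [AddCommGroup g] [Module K g]
    (μ : g → g → g)
    (T : g → g)
    (μi : ℕ → g → g → g) (Ti : ℕ → g → g)
    (hμbil : ∀ i, Bilin K (μi i)) (hTilin : ∀ i, IsLinearMap K (Ti i))
    (hμ0 : μi 0 = μ) (hT0 : Ti 0 = T)
    (hdef1 : ∀ (n : ℕ) (x y z : g),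
      ∑ p ∈ Finset.HasAntidiagonal.antidiagonal n, μi p.1 x (μi p.2 y z)
        = ∑ p ∈ Finset.HasAntidiagonal.antidiagonal n, μi p.1 (μi p.2 x y) z
          + ∑ p ∈ Finset.HasAntidiagonal.antidiagonal n, μi p.1 y (μi p.2 x z))
    (hdef2 : ∀ (n : ℕ) (x y : g),
      ∑ p ∈ Finset.HasAntidiagonal.antidiagonal n, ∑ q ∈ Finset.HasAntidiagonal.antidiagonal p.2,
          μi p.1 (Ti q.1 x) (Ti q.2 y)
        = ∑ p ∈ Finset.HasAntidiagonal.antidiagonal n, ∑ q ∈ Finset.HasAntidiagonal.antidiagonal p.2,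
            Ti p.1 (μi q.1 (Ti q.2 x) y)
          + ∑ p ∈ Finset.HasAntidiagonal.antidiagonal n, ∑ q ∈ Finset.HasAntidiagonal.antidiagonal p.2,
              Ti p.1 (μi q.1 x (Ti q.2 y)))
    (n : ℕ) (hn : 1 ≤ n)
    (hμvanish : ∀ i, 1 ≤ i → i < n → μi i = fun _ _ => 0)
    (hTvanish : ∀ i, 1 ≤ i → i < n → Ti i = fun _ => 0) :
    (∀ x y z : g,
      μ x (μi n y z) + μi n x (μ y z)
        = μ (μi n x y) z + μi n (μ x y) z + μi n y (μ x z) + μ y (μi n x z)) ∧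
    (∀ x y : g,
      μi n (T x) (T y) - T (μi n (T x) y) - T (μi n x (T y))
        + μ (Ti n x) (T y) + μ (T x) (Ti n y) - Ti n (μ (T x) y)
        - T (μ (Ti n x) y) - Ti n (μ x (T y)) - T (μ x (Ti n y)) = 0) := by
  have hμz : ∀ i, 0 < i → i < n → ∀ a b, μi i a b = 0 := fun i h1 h2 a b => by
    rw [hμvanish i h1 h2]
  have hTz : ∀ i, 0 < i → i < n → ∀ a, Ti i a = 0 := fun i h1 h2 a => by
    rw [hTvanish i h1 h2]
  have hzl i := (hμbil i).zero_left
  have hzr i := (hμbil i).zero_right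
  have hT00 i := (hTilin i).map_zero
  refine ⟨fun x y z => ?_, fun x y => ?_⟩
  · have h := hdef1 n x y z
    rw [sum_antidiagonal_eq_add_of_vanish hn _ fun i j _ hi _ => by simp [hμz i hi (by omega)],
      sum_antidiagonal_eq_add_of_vanish hn _ fun i j _ hi _ => by simp [hμz i hi (by omega)],
      sum_antidiagonal_eq_add_of_vanish hn _ fun i j _ hi _ => by simp [hμz i hi (by omega)],
      hμ0] at h
    rw [h]
    abel
  · have h := hdef2 n x y
    rw [sum_antidiagonal_antidiagonal_eq_add_add_of_vanish hn (fun i j k => μi i (Ti j x) (Ti k y))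
        fun i j k _ hc => by
          rcases hc with ⟨h1, h2⟩ | ⟨h1, h2⟩ | ⟨h1, h2⟩
            <;> simp [hμz, hTz, hzl, hzr, h1, h2],
      sum_antidiagonal_antidiagonal_eq_add_add_of_vanish hn (fun i j k => Ti i (μi j (Ti k x) y))
        fun i j k _ hc => by
          rcases hc with ⟨h1, h2⟩ | ⟨h1, h2⟩ | ⟨h1, h2⟩
            <;> simp [hμz, hTz, hzl, hT00, h1, h2],
      sum_antidiagonal_antidiagonal_eq_add_add_of_vanish hn (fun i j k => Ti i (μi j x (Ti k y)))
        fun i j k _ hc => by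
          rcases hc with ⟨h1, h2⟩ | ⟨h1, h2⟩ | ⟨h1, h2⟩
            <;> simp [hμz, hTz, hzr, hT00, h1, h2],
      hμ0, hT0] at h
    rw [← sub_eq_zero.mpr h]
    abel

/-- If `(μ_n, T_n)` is the `n`-infinitesimal of a formal one-parameter
deformation of a Rota-Baxter Leibniz algebra `(g, μ, T)` (i.e. `μ_i = 0` and
`T_i = 0` for `1 ≤ i < n`), then `(μ_n, T_n)` is a 2-cocycle. -/
theorem n_infinitesimal_is_cocycle {K : Type*} [Field K]
    {g : Type*} [AddCommGroup g] [Module K g]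
    (μ : g → g → g) (hbil : Bilin K μ) (hleib : IsLeibnizBracket μ)
    (T : g → g) (hT : IsLinearMap K T)
    (hRB : ∀ x y, μ (T x) (T y) = T (μ (T x) y + μ x (T y)))
    (μi : ℕ → g → g → g) (Ti : ℕ → g → g)
    (hμbil : ∀ i, Bilin K (μi i)) (hTilin : ∀ i, IsLinearMap K (Ti i))
    (hμ0 : μi 0 = μ) (hT0 : Ti 0 = T)
    (hdef1 : ∀ (n : ℕ) (x y z : g),
      ∑ p ∈ Finset.HasAntidiagonal.antidiagonal n, μi p.1 x (μi p.2 y z)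
        = ∑ p ∈ Finset.HasAntidiagonal.antidiagonal n, μi p.1 (μi p.2 x y) z
          + ∑ p ∈ Finset.HasAntidiagonal.antidiagonal n, μi p.1 y (μi p.2 x z))
    (hdef2 : ∀ (n : ℕ) (x y : g),
      ∑ p ∈ Finset.HasAntidiagonal.antidiagonal n, ∑ q ∈ Finset.HasAntidiagonal.antidiagonal p.2,
          μi p.1 (Ti q.1 x) (Ti q.2 y)
        = ∑ p ∈ Finset.HasAntidiagonal.antidiagonal n, ∑ q ∈ Finset.HasAntidiagonal.antidiagonal p.2,
            Ti p.1 (μi q.1 (Ti q.2 x) y)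
          + ∑ p ∈ Finset.HasAntidiagonal.antidiagonal n, ∑ q ∈ Finset.HasAntidiagonal.antidiagonal p.2,
              Ti p.1 (μi q.1 x (Ti q.2 y)))
    (n : ℕ) (hn : 1 ≤ n)
    (hμvanish : ∀ i, 1 ≤ i → i < n → μi i = fun _ _ => 0)
    (hTvanish : ∀ i, 1 ≤ i → i < n → Ti i = fun _ => 0) :
    (∀ x y z : g,
      μ x (μi n y z) + μi n x (μ y z)
        = μ (μi n x y) z + μi n (μ x y) z + μi n y (μ x z) + μ y (μi n x z)) ∧
    (∀ x y : g,
      μi n (T x) (T y) - T (μi n (T x) y) - T (μi n x (T y))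
        + μ (Ti n x) (T y) + μ (T x) (Ti n y) - Ti n (μ (T x) y)
        - T (μ (Ti n x) y) - Ti n (μ x (T y)) - T (μ x (Ti n y)) = 0) :=
  n_infinitesimal_is_cocycle_general μ T μi Ti hμbil hTilin hμ0 hT0 hdef1 hdef2 n hn hμvanish
    hTvanish
end

section
/- Let (g,μ) be a Leibniz algebra over a field K with Rota-Baxter operator T, and let (μ_t,T_t) and (μ'_t,T'_t) be two formal one-parameter deformations of (g,μ,T), given by families (μ_i,T_i) and (μ'_i,T'_i) with μ_0 = μ'_0 = μ and T_0 = T'_0 = T. Suppose they are equivalent via a formal isomorphism ψ_t = Σ ψ_i t^i with ψ_0 = id_g, i.e., for every n ≥ 0 and x,y ∈ g: Σ_{i+j=n} ψ_i(μ'_j(x,y)) = Σ_{i+j+k=n} μ_i(ψ_j x, ψ_k y), and Σ_{i+j=n} ψ_i ∘ T'_j = Σ_{i+j=n} T_i ∘ ψ_j. Then the infinitesimals differ by a coboundary: for all x,y ∈ g, μ'_1(x,y) = μ_1(x,y) + μ(x,ψ_1 y) + μ(ψ_1 x,y) − ψ_1(μ(x,y)), and T'_1 = T_1 + T∘ψ_1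 − ψ_1∘T. -/
open Finset

theorem sum_antidiagonal_one {M : Type*} [AddCommMonoid M] (f : ℕ × ℕ → M) :
    ∑ p ∈ antidiagonal 1, f p = f (0, 1) + f (1, 0) := by
  simp [Nat.sum_antidiagonal_succ]

theorem equivalent_deformations_infinitesimals_general
    {g : Type*} [AddCommGroup g]
    (μ : g → g → g)
    (T : g → g)
    (μi : ℕ → g → g → g) (Ti : ℕ → g → g)
    (μi' : ℕ → g → g → g) (Ti' : ℕ → g → g)
    (hμ0 : μi 0 = μ) (hT0 : Ti 0 = T) (hμ0' : μi' 0 = μ) (hT0' : Ti' 0 = T)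
    (ψi : ℕ → g → g)
    (hψ0 : ψi 0 = id)
    (hequiv1 : ∀ (n : ℕ) (x y : g),
      ∑ p ∈ Finset.HasAntidiagonal.antidiagonal n, ψi p.1 (μi' p.2 x y)
        = ∑ p ∈ Finset.HasAntidiagonal.antidiagonal n, ∑ q ∈ Finset.HasAntidiagonal.antidiagonal p.2,
            μi p.1 (ψi q.1 x) (ψi q.2 y))
    (hequiv2 : ∀ (n : ℕ) (x : g),
      ∑ p ∈ Finset.HasAntidiagonal.antidiagonal n, ψi p.1 (Ti' p.2 x)
        = ∑ p ∈ Finset.HasAntidiagonal.antidiagonal n, Ti p.1 (ψi p.2 x)) :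
    (∀ x y : g,
      μi' 1 x y = μi 1 x y + μ x (ψi 1 y) + μ (ψi 1 x) y - ψi 1 (μ x y)) ∧
    (∀ x : g, Ti' 1 x = Ti 1 x + T (ψi 1 x) - ψi 1 (T x)) := by
  refine ⟨fun x y => ?_, fun x => ?_⟩
  · have first_order := hequiv1 1 x y
    simp only [sum_antidiagonal_one, Nat.antidiagonal_zero, sum_singleton, hψ0, hμ0, hμ0',
      id] at first_order
    rw [eq_sub_iff_add_eq, first_order]
    abel
  · have first_order := hequiv2 1 x
    simp only [sum_antidiagonal_one, hψ0, hT0, hT0', id] at first_order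
    rw [eq_sub_iff_add_eq, first_order]
    abel

/-- If two formal one-parameter deformations `(μ_t, T_t)` and `(μ'_t, T'_t)`
of a Rota-Baxter Leibniz algebra `(g, μ, T)` are equivalent via a formal
isomorphism `ψ_t = Σ ψ_i t^i` with `ψ₀ = id`, then their infinitesimals
differ by a coboundary:
`μ'₁(x,y) = μ₁(x,y) + μ(x, ψ₁ y) + μ(ψ₁ x, y) - ψ₁(μ(x,y))` and
`T'₁ = T₁ + T ∘ ψ₁ - ψ₁ ∘ T`. -/
theorem equivalent_deformations_infinitesimals {K : Type*} [Field K]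
    {g : Type*} [AddCommGroup g] [Module K g]
    (μ : g → g → g) (hbil : Bilin K μ) (hleib : IsLeibnizBracket μ)
    (T : g → g) (hT : IsLinearMap K T)
    (hRB : ∀ x y, μ (T x) (T y) = T (μ (T x) y + μ x (T y)))
    (μi : ℕ → g → g → g) (Ti : ℕ → g → g)
    (μi' : ℕ → g → g → g) (Ti' : ℕ → g → g)
    (hμbil : ∀ i, Bilin K (μi i)) (hTilin : ∀ i, IsLinearMap K (Ti i))
    (hμbil' : ∀ i, Bilin K (μi' i)) (hTilin' : ∀ i, IsLinearMap K (Ti' i))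
    (hμ0 : μi 0 = μ) (hT0 : Ti 0 = T) (hμ0' : μi' 0 = μ) (hT0' : Ti' 0 = T)
    (hdef1 : ∀ (n : ℕ) (x y z : g),
      ∑ p ∈ Finset.HasAntidiagonal.antidiagonal n, μi p.1 x (μi p.2 y z)
        = ∑ p ∈ Finset.HasAntidiagonal.antidiagonal n, μi p.1 (μi p.2 x y) z
          + ∑ p ∈ Finset.HasAntidiagonal.antidiagonal n, μi p.1 y (μi p.2 x z))
    (hdef2 : ∀ (n : ℕ) (x y : g),
      ∑ p ∈ Finset.HasAntidiagonal.antidiagonal n, ∑ q ∈ Finset.HasAntidiagonal.antidiagonal p.2,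
          μi p.1 (Ti q.1 x) (Ti q.2 y)
        = ∑ p ∈ Finset.HasAntidiagonal.antidiagonal n, ∑ q ∈ Finset.HasAntidiagonal.antidiagonal p.2,
            Ti p.1 (μi q.1 (Ti q.2 x) y)
          + ∑ p ∈ Finset.HasAntidiagonal.antidiagonal n, ∑ q ∈ Finset.HasAntidiagonal.antidiagonal p.2,
              Ti p.1 (μi q.1 x (Ti q.2 y)))
    (hdef1' : ∀ (n : ℕ) (x y z : g),
      ∑ p ∈ Finset.HasAntidiagonal.antidiagonal n, μi' p.1 x (μi' p.2 y z)
        = ∑ p ∈ Finset.HasAntidiagonal.antidiagonal n, μi' p.1 (μi' p.2 x y) z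
          + ∑ p ∈ Finset.HasAntidiagonal.antidiagonal n, μi' p.1 y (μi' p.2 x z))
    (hdef2' : ∀ (n : ℕ) (x y : g),
      ∑ p ∈ Finset.HasAntidiagonal.antidiagonal n, ∑ q ∈ Finset.HasAntidiagonal.antidiagonal p.2,
          μi' p.1 (Ti' q.1 x) (Ti' q.2 y)
        = ∑ p ∈ Finset.HasAntidiagonal.antidiagonal n, ∑ q ∈ Finset.HasAntidiagonal.antidiagonal p.2,
            Ti' p.1 (μi' q.1 (Ti' q.2 x) y)
          + ∑ p ∈ Finset.HasAntidiagonal.antidiagonal n, ∑ q ∈ Finset.HasAntidiagonal.antidiagonal p.2,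
              Ti' p.1 (μi' q.1 x (Ti' q.2 y)))
    (ψi : ℕ → g → g) (hψlin : ∀ i, IsLinearMap K (ψi i))
    (hψ0 : ψi 0 = id)
    (hequiv1 : ∀ (n : ℕ) (x y : g),
      ∑ p ∈ Finset.HasAntidiagonal.antidiagonal n, ψi p.1 (μi' p.2 x y)
        = ∑ p ∈ Finset.HasAntidiagonal.antidiagonal n, ∑ q ∈ Finset.HasAntidiagonal.antidiagonal p.2,
            μi p.1 (ψi q.1 x) (ψi q.2 y))
    (hequiv2 : ∀ (n : ℕ) (x : g),
      ∑ p ∈ Finset.HasAntidiagonal.antidiagonal n, ψi p.1 (Ti' p.2 x)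
        = ∑ p ∈ Finset.HasAntidiagonal.antidiagonal n, Ti p.1 (ψi p.2 x)) :
    (∀ x y : g,
      μi' 1 x y = μi 1 x y + μ x (ψi 1 y) + μ (ψi 1 x) y - ψi 1 (μ x y)) ∧
    (∀ x : g, Ti' 1 x = Ti 1 x + T (ψi 1 x) - ψi 1 (T x)) :=
  equivalent_deformations_infinitesimals_general μ T μi Ti μi' Ti' hμ0 hT0 hμ0' hT0' ψi hψ0 hequiv1
    hequiv2
end

section
/- Let 0 → V → ĝ → g → 0 be an abelian extension of a Rota-Baxter Leibniz algebra (g,[.,.]_g,T) by (V,T_V): here (ĝ,[.,.]_∧,T̂) is a Rota-Baxter Leibniz algebra, i : V → ĝ is injective linear, p : ĝ → g is surjective linear, range(i) = ker(p), p([a,b]_∧) = [p(a),p(b)]_g, p∘T̂ = T∘p, T̂∘i = i∘T_V, and [i(u),i(v)]_∧ = 0 for all u,v ∈ V. Let s : g → ĝ be a section, i.e., a linear map with p∘s = id_g. Define l̄ : g × V → V and r̄ : V × g → V by i(l̄(x,u)) = [s(x),i(u)]_∧ and i(r̄(u,x)) = [i(u),s(x)]_∧ (these brackets lie in range(i) =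 ker(p)). Then (V, l̄, r̄, T_V) is a representation of the Rota-Baxter Leibniz algebra (g,[.,.]_g,T); that is, for all x,y ∈ g, u ∈ V: (i) l̄(x,l̄(y,u)) = l̄([x,y]_g,u) + l̄(y,l̄(x,u)); (ii) l̄(x,r̄(u,y)) = r̄(l̄(x,u),y) + r̄(u,[x,y]_g); (iii) r̄(u,[x,y]_g) = r̄(r̄(u,x),y) + l̄(x,r̄(u,y)); (iv) l̄(Tx,T_V u) = T_V(l̄(Tx,u) + l̄(x,T_V u)); (v) r̄(T_V u,Tx) = T_V(r̄(T_V u,x) + r̄(u,Tx)). -/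
/-- A section `s` of an abelian extension
`0 → V → ĝ → g → 0` of a Rota-Baxter Leibniz algebra `(g, brg, T)` by
`(V, TV)` induces a representation `(V, l̄, r̄, TV)` of `(g, brg, T)`,
where `i(l̄(x,u)) = [s(x), i(u)]` and `i(r̄(u,x)) = [i(u), s(x)]`. -/
theorem section_induces_representation
    {K : Type*} [Field K]
    {g : Type*} [AddCommGroup g] [Module K g]
    {gh : Type*} [AddCommGroup gh] [Module K gh]
    {V : Type*} [AddCommGroup V] [Module K V]
    (brg : g → g → g) (hbrg : Bilin K brg) (hgleib : IsLeibnizBracket brg)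
    (T : g → g) (hT : IsLinearMap K T)
    (hRBg : ∀ x y, brg (T x) (T y) = T (brg (T x) y + brg x (T y)))
    (brh : gh → gh → gh) (hbrh : Bilin K brh) (hhleib : IsLeibnizBracket brh)
    (That : gh → gh) (hThat : IsLinearMap K That)
    (hRBh : ∀ a b, brh (That a) (That b) = That (brh (That a) b + brh a (That b)))
    (TV : V → V) (hTV : IsLinearMap K TV)
    (i : V →ₗ[K] gh) (p : gh →ₗ[K] g)
    (hi : Function.Injective i) (hp : Function.Surjective p)
    (hrk : LinearMap.range i = LinearMap.ker p)
    (hpbr : ∀ a b, p (brh a b) = brg (p a) (p b))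
    (hpT : ∀ a, p (That a) = T (p a))
    (hiT : ∀ u, That (i u) = i (TV u))
    (habel : ∀ u v, brh (i u) (i v) = 0)
    (s : g →ₗ[K] gh) (hs : ∀ x, p (s x) = x)
    (lbar : g → V → V) (rbar : V → g → V)
    (hlbar : ∀ x u, i (lbar x u) = brh (s x) (i u))
    (hrbar : ∀ u x, i (rbar u x) = brh (i u) (s x)) :
    IsRBRep brg T lbar rbar TV := by
  obtain ⟨hb1, hb2, hb3, hb4⟩ := hbrh
  have hbneg1 : ∀ a b, brh (-a) b = -brh a b := by
    intro a b
    rw [← neg_one_smul K a, hb2, neg_one_smul]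
  have hbneg2 : ∀ a b, brh a (-b) = -brh a b := by
    intro a b
    rw [← neg_one_smul K b, hb4, neg_one_smul]
  have hsub1 : ∀ a b c, brh (a - b) c = brh a c - brh b c := by
    intro a b c
    rw [sub_eq_add_neg, hb1, hbneg1, sub_eq_add_neg]
  have hsub2 : ∀ a b c, brh a (b - c) = brh a b - brh a c := by
    intro a b c
    rw [sub_eq_add_neg, hb3, hbneg2, sub_eq_add_neg]
  have hker : ∀ a : gh, p a = 0 → ∃ w, i w = a := by
    intro a ha
    have : a ∈ LinearMap.range i := by rw [hrk]; exact ha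
    rw [LinearMap.mem_range] at this
    exact this
  have hbr_s : ∀ x y, ∃ w, s (brg x y) = brh (s x) (s y) - i w := by
    intro x y
    obtain ⟨w, hw⟩ := hker (brh (s x) (s y) - s (brg x y)) (by
      simp [map_sub, hpbr, hs])
    exact ⟨w, by rw [hw]; abel⟩
  have hT_s : ∀ x, ∃ w, s (T x) = That (s x) - i w := by
    intro x
    obtain ⟨w, hw⟩ := hker (That (s x) - s (T x)) (by simp [map_sub, hpT, hs])
    exact ⟨w, by rw [hw]; abel⟩
  refine ⟨⟨?_, ?_, ?_⟩, ?_, ?_⟩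
  · intro x y u
    apply hi
    obtain ⟨w, hw⟩ := hbr_s x y
    simp only [map_add, hlbar]
    rw [hhleib (s x) (s y) (i u), hw, hsub1, habel, sub_zero]
  · intro x y u
    apply hi
    obtain ⟨w, hw⟩ := hbr_s x y
    simp only [map_add, hlbar, hrbar]
    rw [hhleib (s x) (i u) (s y), hw, hsub2, habel, sub_zero]
  · intro x y u
    apply hi
    obtain ⟨w, hw⟩ := hbr_s x y
    simp only [map_add, hlbar, hrbar]
    symm
    rw [← hhleib (i u) (s x) (s y), hw, hsub2, habel, sub_zero]
  · intro x u
    apply hi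
    obtain ⟨w, hw⟩ := hT_s x
    have h0 : brh (i w) (That (i u)) = 0 := by rw [hiT, habel]
    simp only [hlbar, map_add, ← hiT, hThat.map_add]
    rw [hw, hsub1, hsub1, h0, habel, sub_zero, sub_zero, hRBh, hThat.map_add]
  · intro x u
    apply hi
    obtain ⟨w, hw⟩ := hT_s x
    have h0 : brh (That (i u)) (i w) = 0 := by rw [hiT, habel]
    simp only [hrbar, map_add, ← hiT, hThat.map_add]
    rw [hw, hsub2, hsub2, h0, habel, sub_zero, sub_zero, hRBh, hThat.map_add]
end

section
/- Let 0 → V → ĝ → g → 0 be an abelian extension of a Rota-Baxter Leibniz algebra (g,[.,.]_g,T) by (V,T_V), with injection i, projection p, range(i) = ker(p), and Rota-Baxter operator T̂ on ĝ. Let s_1, s_2 : g → ĝ be two sections and set γ = s_1 − s_2 : g → ĝ (γ takes values in range(i)). For a section s define ψ_s(x,y) = [s(x),s(y)]_∧ − s([x,y]_g) and χ_s(x) = T̂(s(x)) − s(T(x)). Then the pairs (ψ_{s_1},χ_{s_1}) and (ψ_{s_2},χ_{s_2}) differ by a coboundary: for all x,y ∈ g, ψ_{s_1}(x,y) = ψ_{s_2}(x,y)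 + [γ(x), s_2(y)]_∧ + [s_2(x), γ(y)]_∧ − γ([x,y]_g), and χ_{s_1}(x) = χ_{s_2}(x) + T̂(γ(x)) − γ(T(x)). -/
/-- For two sections `s₁, s₂` of an abelian extension of a Rota-Baxter Leibniz
algebra, with `γ = s₁ - s₂`, the associated cocycles
`ψ_s(x,y) = [s(x), s(y)] - s([x,y])` and `χ_s(x) = T̂(s(x)) - s(T(x))` differ
by a coboundary:
`ψ_{s₁}(x,y) = ψ_{s₂}(x,y) + [γ(x), s₂(y)] + [s₂(x), γ(y)] - γ([x,y])` and
`χ_{s₁}(x) = χ_{s₂}(x) + T̂(γ(x)) - γ(T(x))`. -/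
theorem cocycle_independent_of_section
    {K : Type*} [Field K]
    {g : Type*} [AddCommGroup g] [Module K g]
    {gh : Type*} [AddCommGroup gh] [Module K gh]
    {V : Type*} [AddCommGroup V] [Module K V]
    (brg : g → g → g) (hbrg : Bilin K brg) (hgleib : IsLeibnizBracket brg)
    (T : g → g) (hT : IsLinearMap K T)
    (hRBg : ∀ x y, brg (T x) (T y) = T (brg (T x) y + brg x (T y)))
    (brh : gh → gh → gh) (hbrh : Bilin K brh) (hhleib : IsLeibnizBracket brh)
    (That : gh → gh) (hThat : IsLinearMap K That)
    (hRBh : ∀ a b, brh (That a) (That b) = That (brh (That a) b + brh a (That b)))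
    (TV : V → V) (hTV : IsLinearMap K TV)
    (i : V →ₗ[K] gh) (p : gh →ₗ[K] g)
    (hi : Function.Injective i) (hp : Function.Surjective p)
    (hrk : LinearMap.range i = LinearMap.ker p)
    (hpbr : ∀ a b, p (brh a b) = brg (p a) (p b))
    (hpT : ∀ a, p (That a) = T (p a))
    (hiT : ∀ u, That (i u) = i (TV u))
    (habel : ∀ u v, brh (i u) (i v) = 0)
    (s₁ s₂ : g →ₗ[K] gh) (hs₁ : ∀ x, p (s₁ x) = x) (hs₂ : ∀ x, p (s₂ x) = x) :
    (∀ x y : g,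
      brh (s₁ x) (s₁ y) - s₁ (brg x y)
        = (brh (s₂ x) (s₂ y) - s₂ (brg x y))
          + brh (s₁ x - s₂ x) (s₂ y) + brh (s₂ x) (s₁ y - s₂ y)
          - (s₁ (brg x y) - s₂ (brg x y))) ∧
    (∀ x : g,
      That (s₁ x) - s₁ (T x)
        = (That (s₂ x) - s₂ (T x)) + That (s₁ x - s₂ x)
          - (s₁ (T x) - s₂ (T x))) := by
  obtain ⟨hl1, _, hl3, _⟩ := hbrh
  have hsubL : ∀ a a' b, brh (a - a') b = brh a b - brh a' b := fun a a' b => by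
    have h := hl1 (a - a') a' b
    rw [sub_add_cancel] at h
    rw [eq_sub_iff_add_eq, ← h]
  have hsubR : ∀ a b b', brh a (b - b') = brh a b - brh a b' := fun a b b' => by
    have h := hl3 a (b - b') b'
    rw [sub_add_cancel] at h
    rw [eq_sub_iff_add_eq, ← h]
  have hker : ∀ x : g, ∃ u : V, i u = s₁ x - s₂ x := by
    intro x
    have : s₁ x - s₂ x ∈ LinearMap.ker p := by
      simp [LinearMap.mem_ker, map_sub, hs₁, hs₂]
    rw [← hrk] at this
    exact this
  constructor
  · intro x y
    obtain ⟨u, hu⟩ := hker x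
    obtain ⟨v, hv⟩ := hker y
    have hzero : brh (s₁ x - s₂ x) (s₁ y - s₂ y) = 0 := by
      rw [← hu, ← hv]; exact habel u v
    have key : brh (s₁ x) (s₁ y)
        = brh (s₂ x) (s₂ y) + brh (s₁ x - s₂ x) (s₂ y) + brh (s₂ x) (s₁ y - s₂ y) := by
      have e1 : brh (s₁ x) (s₁ y) - brh (s₂ x) (s₁ y) = brh (s₁ x - s₂ x) (s₁ y) :=
        (hsubL _ _ _).symm
      have e2 : brh (s₁ x - s₂ x) (s₁ y) - brh (s₁ x - s₂ x) (s₂ y)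
          = brh (s₁ x - s₂ x) (s₁ y - s₂ y) := (hsubR _ _ _).symm
      have e3 : brh (s₂ x) (s₁ y) - brh (s₂ x) (s₂ y) = brh (s₂ x) (s₁ y - s₂ y) :=
        (hsubR _ _ _).symm
      rw [hzero] at e2
      have h4 : brh (s₁ x - s₂ x) (s₁ y) = brh (s₁ x - s₂ x) (s₂ y) :=
        sub_eq_zero.mp e2
      have h1 : brh (s₁ x) (s₁ y) = brh (s₂ x) (s₁ y) + brh (s₁ x - s₂ x) (s₁ y) := by
        rw [← e1]; abel
      have h3 : brh (s₂ x) (s₁ y) = brh (s₂ x) (s₂ y) + brh (s₂ x) (s₁ y - s₂ y) := by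
        rw [← e3]; abel
      rw [h1, h3, h4]; abel
    rw [key]; abel
  · intro x
    have : That (s₁ x - s₂ x) = That (s₁ x) - That (s₂ x) := by
      rw [sub_eq_add_neg, hThat.map_add, ← neg_one_smul K (s₂ x), hThat.map_smul,
        neg_one_smul, ← sub_eq_add_neg]
    rw [this]; abel
end
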